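/- Let λ ≥ 2, n ∈ ℝ² nonzero, H a law on ℝ² with continuous, strictly positive density h and finite first moment ∫_{ℝ²} |n^⊤x| h(x) dx < ∞, and for δ > 0 let h*_δ(x) = λ·(h(x)𝟙_{L_δ}(x)/H(L_δ))·H_δ((−∞,[x]_1)×ℝ)^{λ−1}. Then lim_{δ→+∞} ∫_{ℝ²} n^⊤x · h*_δ(x) dx = λ·∫_{ℝ²} n^⊤x · H((−∞,[x]_1)×ℝ)^{λ−1} h(x) dx. -/

import Mathlib

open MeasureTheory Filter Topology

/-!
Truncation to the half-plane `L_δ` only enters through `H(L_δ)` and `H_δ((−∞,u)×ℝ)`, and both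
tend to their untruncated values by continuity of measure from below as `L_δ ↑ ℝ²`; hence `h*_δ`
converges pointwise. Once `H(L_δ) > 1/2` we have `h*_δ ≤ 2λh`, so the finite first moment gives
the integrable majorant `2λ |n^⊤x| h(x)` for dominated convergence.
-/

lemma tendsto_toReal_measure_setOf_lt_inter_atTop {α : Type*} [MeasurableSpace α]
    (H : Measure α) [IsFiniteMeasure H] (φ : α → ℝ) (s : Set α) :
    Tendsto (fun δ : ℝ => (H ({y | φ y < δ} ∩ s)).toReal) atTop (𝓝 (H s).toReal) := by
  have hmono : Monotone fun δ : ℝ => {y | φ y < δ} ∩ s :=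
    fun a b hab => Set.inter_subset_inter_left _ fun y hy => lt_of_lt_of_le hy hab
  have hunion : (⋃ δ : ℝ, {y | φ y < δ} ∩ s) = s := by
    rw [← Set.iUnion_inter, Set.iUnion_eq_univ_iff.2 fun y => ⟨φ y + 1, by simp⟩,
      Set.univ_inter]
  have hlim := tendsto_measure_iUnion_atTop (μ := H) hmono
  rw [hunion] at hlim
  exact (ENNReal.tendsto_toReal (measure_ne_top H s)).comp hlim

lemma tendsto_toReal_measure_setOf_lt_atTop {α : Type*} [MeasurableSpace α]
    (H : Measure α) [IsProbabilityMeasure H] (φ : α → ℝ) :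
    Tendsto (fun δ : ℝ => (H {y | φ y < δ}).toReal) atTop (𝓝 1) := by
  simpa using tendsto_toReal_measure_setOf_lt_inter_atTop H φ Set.univ

lemma measurable_toReal_measure_inter_setOf_fst_lt {β : Type*} [MeasurableSpace β]
    (H : Measure (ℝ × β)) [IsFiniteMeasure H] (t : Set (ℝ × β)) :
    Measurable fun x : ℝ × β => (H (t ∩ {y | y.1 < x.1})).toReal := by
  have hmono : Monotone fun u : ℝ => (H (t ∩ {y | y.1 < u})).toReal :=
    fun a b hab => ENNReal.toReal_mono (measure_ne_top H _)
      (measure_mono fun y hy => ⟨hy.1, lt_of_lt_of_le hy.2 hab⟩)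
  exact hmono.measurable.comp measurable_fst

section SelectedDensity

variable {α : Type*} [MeasurableSpace α]

/-- The density of the best of `lam` independent draws from `H` conditioned on `{φ < δ}`, a point
being better than `x` when it lies in `s x`. The `h*_δ` of the paper is the case
`φ y = n^⊤y`, `s x = (−∞,[x]_1)×ℝ`. -/
noncomputable def selectedDensity (lam : ℕ) (H : Measure α) (h φ : α → ℝ)
    (s : α → Set α) (δ : ℝ) (x : α) : ℝ :=
  lam * ({y | φ y < δ}.indicator h x / (H {y | φ y < δ}).toReal) *
    ((H ({y | φ y < δ} ∩ s x)).toReal / (H {y | φ y < δ}).toReal) ^ (lam - 1)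

variable (lam : ℕ) (H : Measure α) {h : α → ℝ} (φ : α → ℝ) (s : α → Set α)

lemma selectedDensity_nonneg (hh : ∀ x, 0 ≤ h x) (δ : ℝ) (x : α) :
    0 ≤ selectedDensity lam H h φ s δ x := by
  have := Set.indicator_nonneg (fun y _ => hh y) x (s := {y | φ y < δ})
  unfold selectedDensity
  positivity

lemma selectedDensity_le [IsFiniteMeasure H] (hh : ∀ x, 0 ≤ h x) {δ : ℝ}
    (hδ : 1 / 2 < (H {y | φ y < δ}).toReal) (x : α) :
    selectedDensity lam H h φ s δ x ≤ 2 * lam * h x := by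
  set D := (H {y | φ y < δ}).toReal
  have hD : 0 < D := by linarith
  have hratio : (H ({y | φ y < δ} ∩ s x)).toReal / D ≤ 1 :=
    div_le_one_of_le₀ (ENNReal.toReal_mono (measure_ne_top H _)
      (measure_mono Set.inter_subset_left)) hD.le
  have hind : {y | φ y < δ}.indicator h x / D ≤ 2 * h x := by
    rw [div_le_iff₀ hD]
    nlinarith [Set.indicator_le_self' (fun y _ => hh y) x (s := {y | φ y < δ}),
      mul_nonneg (hh x) (by linarith : 0 ≤ 2 * D - 1)]
  calc selectedDensity lam H h φ s δ x
      ≤ lam * (2 * h x) * 1 := by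
        unfold selectedDensity
        gcongr
        · exact mul_nonneg (Nat.cast_nonneg _) (by linarith [hh x])
        · exact pow_le_one₀ (by positivity) hratio
    _ = 2 * lam * h x := by ring

lemma tendsto_selectedDensity_atTop [IsProbabilityMeasure H] (x : α) :
    Tendsto (fun δ => selectedDensity lam H h φ s δ x) atTop
      (𝓝 (lam * h x * (H (s x)).toReal ^ (lam - 1))) := by
  have hD := tendsto_toReal_measure_setOf_lt_atTop H φ
  have hind : ∀ᶠ δ in atTop, {y | φ y < δ}.indicator h x = h x :=
    (eventually_gt_atTop (φ x)).mono fun δ hδ =>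
      Set.indicator_of_mem (show x ∈ {y | φ y < δ} from hδ) h
  have hlim := (((tendsto_const_nhds (x := h x)).div hD one_ne_zero).const_mul (lam : ℝ)).mul
    (((tendsto_toReal_measure_setOf_lt_inter_atTop H φ (s x)).div hD one_ne_zero).pow (lam - 1))
  simp only [div_one] at hlim
  refine hlim.congr' ?_
  filter_upwards [hind] with δ hδ
  simp only [selectedDensity, hδ, Pi.div_apply]

lemma measurable_selectedDensity (hh : Measurable h) (hφ : Measurable φ)
    (hs : ∀ t, Measurable fun x => (H (t ∩ s x)).toReal) (δ : ℝ) :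
    Measurable (selectedDensity lam H h φ s δ) :=
  (measurable_const.mul ((hh.indicator (hφ measurableSet_Iio)).div_const _)).mul
    (((hs _).div_const _).pow_const _)

theorem tendsto_integral_mul_selectedDensity_atTop {μ : Measure α} [IsProbabilityMeasure H]
    {f : α → ℝ} (hf : Measurable f) (hh : Measurable h) (hh₀ : ∀ x, 0 ≤ h x)
    (hφ : Measurable φ) (hs : ∀ t, Measurable fun x => (H (t ∩ s x)).toReal)
    (hmom : Integrable (fun x => |f x| * h x) μ) :
    Tendsto (fun δ => ∫ x, f x * selectedDensity lam H h φ s δ x ∂μ) atTop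
      (𝓝 (∫ x, f x * (lam * h x * (H (s x)).toReal ^ (lam - 1)) ∂μ)) := by
  have hD : ∀ᶠ δ : ℝ in atTop, 1 / 2 < (H {y | φ y < δ}).toReal :=
    (tendsto_toReal_measure_setOf_lt_atTop H φ).eventually (eventually_gt_nhds (by norm_num))
  have hmeas : ∀ δ, AEStronglyMeasurable (fun x => f x * selectedDensity lam H h φ s δ x) μ :=
    fun δ => (hf.mul (measurable_selectedDensity lam H φ s hh hφ hs δ)).aestronglyMeasurable
  have hbound : ∀ᶠ δ in atTop, ∀ᵐ x ∂μ,
      ‖f x * selectedDensity lam H h φ s δ x‖ ≤ 2 * lam * (|f x| * h x) := by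
    filter_upwards [hD] with δ hδ
    refine .of_forall fun x => ?_
    rw [norm_mul, Real.norm_eq_abs,
      Real.norm_of_nonneg (selectedDensity_nonneg lam H φ s hh₀ δ x)]
    calc |f x| * selectedDensity lam H h φ s δ x ≤ |f x| * (2 * lam * h x) := by
          gcongr
          exact selectedDensity_le lam H φ s hh₀ hδ x
      _ = 2 * lam * (|f x| * h x) := by ring
  exact tendsto_integral_filter_of_dominated_convergence _ (.of_forall hmeas) hbound
    (hmom.const_mul _)
    (.of_forall fun x => (tendsto_selectedDensity_atTop lam H φ s x).const_mul (f x))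

end SelectedDensity

theorem mean_progress_limit_general
    (lam : ℕ)
    (n : ℝ × ℝ)
    (h : ℝ × ℝ → ℝ) (hh : Continuous h) (hpos : ∀ x, 0 < h x)
    (H : Measure (ℝ × ℝ)) [IsProbabilityMeasure H]
    -- finite first moment of n^⊤x under h
    (hmom : Integrable (fun x : ℝ × ℝ => |n.1 * x.1 + n.2 * x.2| * h x))
    -- the selected-movement density h*_δ
    (hstar : ℝ → ℝ × ℝ → ℝ)
    (hhstar : ∀ δ x, hstar δ x =
      (lam : ℝ) *
        (Set.indicator {y : ℝ × ℝ | n.1 * y.1 + n.2 * y.2 < δ} h x /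
          (H {y : ℝ × ℝ | n.1 * y.1 + n.2 * y.2 < δ}).toReal) *
        ((H {y : ℝ × ℝ | n.1 * y.1 + n.2 * y.2 < δ ∧ y.1 < x.1}).toReal /
          (H {y : ℝ × ℝ | n.1 * y.1 + n.2 * y.2 < δ}).toReal) ^ (lam - 1)) :
    Filter.Tendsto
      (fun δ : ℝ => ∫ x : ℝ × ℝ, (n.1 * x.1 + n.2 * x.2) * hstar δ x)
      Filter.atTop
      (nhds ((lam : ℝ) *
        ∫ x : ℝ × ℝ,
          (n.1 * x.1 + n.2 * x.2) *
            (H {y : ℝ × ℝ | y.1 < x.1}).toReal ^ (lam - 1) * h x)) := by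
  have hφ : Measurable fun y : ℝ × ℝ => n.1 * y.1 + n.2 * y.2 := by fun_prop
  have hstar_eq : hstar = selectedDensity lam H h (fun y => n.1 * y.1 + n.2 * y.2)
      (fun x => {y | y.1 < x.1}) := funext₂ hhstar
  have hlimit : ∀ x : ℝ × ℝ,
      (lam : ℝ) * ((n.1 * x.1 + n.2 * x.2) * (H {y | y.1 < x.1}).toReal ^ (lam - 1) * h x) =
        (n.1 * x.1 + n.2 * x.2) * (lam * h x * (H {y | y.1 < x.1}).toReal ^ (lam - 1)) :=
    fun x => by ring
  rw [hstar_eq, ← integral_const_mul]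
  simp_rw [hlimit]
  exact tendsto_integral_mul_selectedDensity_atTop lam H _ _ hφ hh.measurable
    (fun x => (hpos x).le) hφ (measurable_toReal_measure_inter_setOf_fst_lt H) hmom

/-- As `δ → +∞`, the mean of `n^⊤x` under the selected-movement
density `h*_δ` converges to `λ·∫ n^⊤x · H((−∞,[x]_1)×ℝ)^{λ−1} h(x) dx`, the asymptotic
mean one-step progress of the constant-step-size (1,λ) evolution strategy. -/
theorem mean_progress_limit
    (lam : ℕ) (hlam : 2 ≤ lam)
    (n : ℝ × ℝ) (hn : n ≠ 0)
    (h : ℝ × ℝ → ℝ) (hh : Continuous h) (hpos : ∀ x, 0 < h x)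
    (H : Measure (ℝ × ℝ)) [IsProbabilityMeasure H]
    (hH : H = volume.withDensity (fun x => ENNReal.ofReal (h x)))
    -- finite first moment of n^⊤x under h
    (hmom : Integrable (fun x : ℝ × ℝ => |n.1 * x.1 + n.2 * x.2| * h x))
    -- the selected-movement density h*_δ
    (hstar : ℝ → ℝ × ℝ → ℝ)
    (hhstar : ∀ δ x, hstar δ x =
      (lam : ℝ) *
        (Set.indicator {y : ℝ × ℝ | n.1 * y.1 + n.2 * y.2 < δ} h x /
          (H {y : ℝ × ℝ | n.1 * y.1 + n.2 * y.2 < δ}).toReal) *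
        ((H {y : ℝ × ℝ | n.1 * y.1 + n.2 * y.2 < δ ∧ y.1 < x.1}).toReal /
          (H {y : ℝ × ℝ | n.1 * y.1 + n.2 * y.2 < δ}).toReal) ^ (lam - 1)) :
    Filter.Tendsto
      (fun δ : ℝ => ∫ x : ℝ × ℝ, (n.1 * x.1 + n.2 * x.2) * hstar δ x)
      Filter.atTop
      (nhds ((lam : ℝ) *
        ∫ x : ℝ × ℝ,
          (n.1 * x.1 + n.2 * x.2) *
            (H {y : ℝ × ℝ | y.1 < x.1}).toReal ^ (lam - 1) * h x)) :=
  mean_progress_limit_general lam n h hh hpos H hmom hstar hhstar
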